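/- Let m : ℕ and let V ⊆ (Fin m → ZMod 2) be a doubly even code spanned by linearly independent vectors v₁, v₂, v₃ such that: |v_i| ≡ 4 (mod 8) for i = 1,2,3; |supp v_i ∩ supp v_j| ≡ 0 (mod 4) for 1 ≤ i < j ≤ 3; |supp v₁ ∩ supp v₂ ∩ supp v₃| is odd; and every coordinate k ∈ Fin m lies in the support of some element of V. Then m ≥ 17, and if m = 17 then some permutation of the 17 coordinates maps V onto the code spanned by the indicator vectors of {1,...,12}, {1,...,8,13,14,15,16} and {1,2,3,4,5,9,10,11,13,14,15,17}. -/

import Mathlib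

/-- The support of a vector in `F₂^m`, as a finset of coordinates. -/
def supp {m : ℕ} (v : Fin m → ZMod 2) : Finset (Fin m) :=
  Finset.univ.filter fun k => v k ≠ 0

/-- The indicator vector in `F₂^m` of a set of (1-based) coordinate labels. -/
def indVec {m : ℕ} (S : Finset ℕ) : Fin m → ZMod 2 :=
  fun k => if (k : ℕ) + 1 ∈ S then 1 else 0

/-- The linear automorphism of `F₂^m` permuting coordinates by `π`. -/
def permMap {m : ℕ} (π : Equiv.Perm (Fin m)) :
    (Fin m → ZMod 2) →ₗ[ZMod 2] (Fin m → ZMod 2) where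
  toFun v := v ∘ π
  map_add' _ _ := rfl
  map_smul' _ _ := rfl

/-!
Split the coordinates into the cells of the Venn diagram of `supp v₁`, `supp v₂`, `supp v₃`;
the cell outside all three supports is empty because the code covers every coordinate. The
weight conditions become congruences on the seven cell sizes: the triple cell `z` is odd, each
pair cell is `≡ -z (mod 4)` and each single cell is then fixed mod 8. The least total is 17,
attained only for single cells 1, pair cells 3 and triple cell 5. Three vectors are determined
up to a permutation of coordinates by their cell sizes, and the paper's code has exactly these.
-/

open Finset

theorem Equiv.Perm.exists_comp_eq_of_card_fiber_eq {α β : Type*} [Fintype α] [DecidableEq β]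
    {f g : α → β} (h : ∀ b, #{a | f a = b} = #{a | g a = b}) :
    ∃ π : Equiv.Perm α, f ∘ π = g := by
  refine ⟨Equiv.ofFiberEquiv fun b => Fintype.equivOfCardEq ?_,
    funext (Equiv.ofFiberEquiv_map _)⟩
  simpa only [Fintype.card_subtype] using (h b).symm

abbrev Pattern : Type := ZMod 2 × ZMod 2 × ZMod 2

section Cells

variable {m : ℕ} (v₁ v₂ v₃ : Fin m → ZMod 2)

def pattern (k : Fin m) : Pattern := (v₁ k, v₂ k, v₃ k)

def cellCard (p : Pattern) : ℕ := #{k | pattern v₁ v₂ v₃ k = p}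

lemma card_filter_eq_sum_cellCard {P : Fin m → Prop} [DecidablePred P]
    (Q : Pattern → Prop) [DecidablePred Q] (hPQ : ∀ k, P k ↔ Q (pattern v₁ v₂ v₃ k)) :
    #{k | P k} = ∑ p, if Q p then cellCard v₁ v₂ v₃ p else 0 := by
  rw [← sum_filter, card_eq_sum_card_fiberwise (f := pattern v₁ v₂ v₃) (t := univ.filter Q)
      (fun k hk => by simpa [hPQ] using hk)]
  refine sum_congr rfl fun p hp => ?_
  rw [filter_filter]
  refine congrArg card (filter_congr fun k _ => ?_)
  simp only [mem_filter, mem_univ, true_and] at hp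
  exact ⟨And.right, fun h => ⟨(hPQ k).mpr (h ▸ hp), h⟩⟩

lemma ZMod.sum_univ_two {M : Type*} [AddCommMonoid M] (f : ZMod 2 → M) :
    ∑ x, f x = f 0 + f 1 :=
  Fin.sum_univ_two f

lemma sum_pattern {M : Type*} [AddCommMonoid M] (f : Pattern → M) :
    ∑ p, f p = f (0,0,0) + f (0,0,1) + f (0,1,0) + f (0,1,1)
      + f (1,0,0) + f (1,0,1) + f (1,1,0) + f (1,1,1) := by
  simp only [Fintype.sum_prod_type, ZMod.sum_univ_two]
  abel

local notation "c" => cellCard v₁ v₂ v₃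

lemma card_eq_sum_cellCard : m = c (0,0,0) + c (0,0,1) + c (0,1,0) + c (0,1,1)
    + c (1,0,0) + c (1,0,1) + c (1,1,0) + c (1,1,1) := by
  simpa [sum_pattern] using
    card_filter_eq_sum_cellCard v₁ v₂ v₃ (P := fun _ => True) (fun _ => True) fun _ => Iff.rfl

lemma card_supp₁ : #(supp v₁) = c (1,0,0) + c (1,0,1) + c (1,1,0) + c (1,1,1) :=
  (card_filter_eq_sum_cellCard v₁ v₂ v₃ (fun p => p.1 ≠ 0) fun _ => Iff.rfl).trans
    (by simp [sum_pattern])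

lemma card_supp₂ : #(supp v₂) = c (0,1,0) + c (0,1,1) + c (1,1,0) + c (1,1,1) :=
  (card_filter_eq_sum_cellCard v₁ v₂ v₃ (fun p => p.2.1 ≠ 0) fun _ => Iff.rfl).trans
    (by simp [sum_pattern])

lemma card_supp₃ : #(supp v₃) = c (0,0,1) + c (0,1,1) + c (1,0,1) + c (1,1,1) :=
  (card_filter_eq_sum_cellCard v₁ v₂ v₃ (fun p => p.2.2 ≠ 0) fun _ => Iff.rfl).trans
    (by simp [sum_pattern])

lemma card_supp_inter₁₂ : #(supp v₁ ∩ supp v₂) = c (1,1,0) + c (1,1,1) := by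
  rw [supp, supp, ← filter_and]
  exact (card_filter_eq_sum_cellCard v₁ v₂ v₃ (fun p => p.1 ≠ 0 ∧ p.2.1 ≠ 0)
    fun _ => Iff.rfl).trans (by simp [sum_pattern])

lemma card_supp_inter₁₃ : #(supp v₁ ∩ supp v₃) = c (1,0,1) + c (1,1,1) := by
  rw [supp, supp, ← filter_and]
  exact (card_filter_eq_sum_cellCard v₁ v₂ v₃ (fun p => p.1 ≠ 0 ∧ p.2.2 ≠ 0)
    fun _ => Iff.rfl).trans (by simp [sum_pattern])

lemma card_supp_inter₂₃ : #(supp v₂ ∩ supp v₃) = c (0,1,1) + c (1,1,1) := by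
  rw [supp, supp, ← filter_and]
  exact (card_filter_eq_sum_cellCard v₁ v₂ v₃ (fun p => p.2.1 ≠ 0 ∧ p.2.2 ≠ 0)
    fun _ => Iff.rfl).trans (by simp [sum_pattern])

lemma card_supp_inter₁₂₃ : #(supp v₁ ∩ supp v₂ ∩ supp v₃) = c (1,1,1) := by
  rw [supp, supp, supp, ← filter_and, ← filter_and]
  exact (card_filter_eq_sum_cellCard v₁ v₂ v₃ (fun p => (p.1 ≠ 0 ∧ p.2.1 ≠ 0) ∧ p.2.2 ≠ 0)
    fun _ => Iff.rfl).trans (by simp [sum_pattern])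

lemma cellCard_zero_of_covers
    (hcov : ∀ k, ∃ v ∈ Submodule.span (ZMod 2) {v₁, v₂, v₃}, v k ≠ 0) : c (0,0,0) = 0 := by
  refine card_eq_zero.mpr (filter_eq_empty_iff.mpr fun k _ hk => ?_)
  obtain ⟨v, hv, hvk⟩ := hcov k
  simp only [pattern, Prod.mk.injEq] at hk
  have : Submodule.span (ZMod 2) {v₁, v₂, v₃} ≤ LinearMap.ker (LinearMap.proj k) := by
    simp [Submodule.span_le, Set.insert_subset_iff, hk]
  exact hvk (this hv)

end Cells

lemma map_permMap_span_of_pattern_comp {m : ℕ} {v₁ v₂ v₃ w₁ w₂ w₃ : Fin m → ZMod 2}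
    {π : Equiv.Perm (Fin m)} (h : pattern v₁ v₂ v₃ ∘ π = pattern w₁ w₂ w₃) :
    Submodule.map (permMap π) (Submodule.span (ZMod 2) {v₁, v₂, v₃}) =
      Submodule.span (ZMod 2) {w₁, w₂, w₃} := by
  simp only [funext_iff, Function.comp_apply, pattern, Prod.mk.injEq, forall_and] at h
  obtain ⟨h₁, h₂, h₃⟩ := h
  obtain rfl : w₁ = v₁ ∘ π := (funext h₁).symm
  obtain rfl : w₂ = v₂ ∘ π := (funext h₂).symm
  obtain rfl : w₃ = v₃ ∘ π := (funext h₃).symm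
  rw [Submodule.map_span, Set.image_insert_eq, Set.image_insert_eq, Set.image_singleton]
  rfl

lemma venn_cells_of_congruences {x₁ x₂ x₃ y₁₂ y₁₃ y₂₃ z : ℕ}
    (h₁ : (x₁ + y₁₃ + y₁₂ + z) % 8 = 4) (h₂ : (x₂ + y₂₃ + y₁₂ + z) % 8 = 4)
    (h₃ : (x₃ + y₂₃ + y₁₃ + z) % 8 = 4) (h₁₂ : (y₁₂ + z) % 4 = 0) (h₁₃ : (y₁₃ + z) % 4 = 0)
    (h₂₃ : (y₂₃ + z) % 4 = 0) (hz : z % 2 = 1) :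
    17 ≤ x₁ + x₂ + x₃ + y₁₂ + y₁₃ + y₂₃ + z ∧
      (x₁ + x₂ + x₃ + y₁₂ + y₁₃ + y₂₃ + z = 17 →
        x₁ = 1 ∧ x₂ = 1 ∧ x₃ = 1 ∧ y₁₂ = 3 ∧ y₁₃ = 3 ∧ y₂₃ = 3 ∧ z = 5) := by
  omega

lemma exists_perm_pattern_comp_eq_basicRep {v₁ v₂ v₃ : Fin 17 → ZMod 2}
    (h₀ : cellCard v₁ v₂ v₃ (0,0,0) = 0) (h₁ : cellCard v₁ v₂ v₃ (1,0,0) = 1)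
    (h₂ : cellCard v₁ v₂ v₃ (0,1,0) = 1) (h₃ : cellCard v₁ v₂ v₃ (0,0,1) = 1)
    (h₁₂ : cellCard v₁ v₂ v₃ (1,1,0) = 3) (h₁₃ : cellCard v₁ v₂ v₃ (1,0,1) = 3)
    (h₂₃ : cellCard v₁ v₂ v₃ (0,1,1) = 3) (h₁₂₃ : cellCard v₁ v₂ v₃ (1,1,1) = 5) :
    ∃ π : Equiv.Perm (Fin 17), pattern v₁ v₂ v₃ ∘ π =
      pattern (indVec {1, 2, 3, 4, 5, 6, 7, 8, 9, 10, 11, 12})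
        (indVec {1, 2, 3, 4, 5, 6, 7, 8, 13, 14, 15, 16})
        (indVec {1, 2, 3, 4, 5, 9, 10, 11, 13, 14, 15, 17}) := by
  refine Equiv.Perm.exists_comp_eq_of_card_fiber_eq fun p => ?_
  obtain ⟨a, b, c⟩ := p
  fin_cases a <;> fin_cases b <;> fin_cases c
  -- the eight patterns in lexicographic order
  exacts [h₀.trans (by decide), h₃.trans (by decide), h₂.trans (by decide),
    h₂₃.trans (by decide), h₁.trans (by decide), h₁₃.trans (by decide), h₁₂.trans (by decide),
    h₁₂₃.trans (by decide)]

theorem stmt16_general (m : ℕ) (v₁ v₂ v₃ : Fin m → ZMod 2)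
    (h1 : (supp v₁).card % 8 = 4) (h2 : (supp v₂).card % 8 = 4)
    (h3 : (supp v₃).card % 8 = 4)
    (h12 : (supp v₁ ∩ supp v₂).card % 4 = 0)
    (h13 : (supp v₁ ∩ supp v₃).card % 4 = 0)
    (h23 : (supp v₂ ∩ supp v₃).card % 4 = 0)
    (h123 : Odd (supp v₁ ∩ supp v₂ ∩ supp v₃).card)
    (hcov : ∀ k : Fin m, ∃ v ∈ Submodule.span (ZMod 2)
      ({v₁, v₂, v₃} : Set (Fin m → ZMod 2)), v k ≠ 0) :
    17 ≤ m ∧ (m = 17 → ∃ π : Equiv.Perm (Fin m),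
      Submodule.map (permMap π)
          (Submodule.span (ZMod 2) ({v₁, v₂, v₃} : Set (Fin m → ZMod 2))) =
        Submodule.span (ZMod 2) ({indVec {1, 2, 3, 4, 5, 6, 7, 8, 9, 10, 11, 12}, indVec {1, 2, 3, 4, 5, 6, 7, 8, 13, 14, 15, 16},
          indVec {1, 2, 3, 4, 5, 9, 10, 11, 13, 14, 15, 17}} : Set (Fin m → ZMod 2))) := by
  simp only [card_supp₁ v₁ v₂ v₃, card_supp₂ v₁ v₂ v₃, card_supp₃ v₁ v₂ v₃,
    card_supp_inter₁₂ v₁ v₂ v₃, card_supp_inter₁₃ v₁ v₂ v₃, card_supp_inter₂₃ v₁ v₂ v₃,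
    card_supp_inter₁₂₃ v₁ v₂ v₃, Nat.odd_iff] at h1 h2 h3 h12 h13 h23 h123
  have hm := card_eq_sum_cellCard v₁ v₂ v₃
  have h₀ := cellCard_zero_of_covers v₁ v₂ v₃ hcov
  obtain ⟨hle, hcells⟩ := venn_cells_of_congruences h1 h2 h3 h12 h13 h23 h123
  refine ⟨by omega, fun h17 => ?_⟩
  subst h17
  obtain ⟨hx₁, hx₂, hx₃, hy₁₂, hy₁₃, hy₂₃, hz⟩ := hcells (by omega)
  obtain ⟨π, hπ⟩ := exists_perm_pattern_comp_eq_basicRep h₀ hx₁ hx₂ hx₃ hy₁₂ hy₁₃ hy₂₃ hz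
  exact ⟨π, map_permMap_span_of_pattern_comp hπ⟩

/-- Theorem 4.4, case of `C₅³` (characteristic vector `(111000)`): a doubly even
code realizing `C₅³` has degree at least 17, and in degree 17 it is, up to a
permutation of coordinates, the basic representation given in the paper. -/
theorem stmt16 (m : ℕ) (v₁ v₂ v₃ : Fin m → ZMod 2)
    (hli : LinearIndependent (ZMod 2) ![v₁, v₂, v₃])
    (hde4 : ∀ v ∈ Submodule.span (ZMod 2) ({v₁, v₂, v₃} : Set (Fin m → ZMod 2)),
      (supp v).card % 4 = 0)
    (hde2 : ∀ u ∈ Submodule.span (ZMod 2) ({v₁, v₂, v₃} : Set (Fin m → ZMod 2)),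
      ∀ v ∈ Submodule.span (ZMod 2) ({v₁, v₂, v₃} : Set (Fin m → ZMod 2)),
      (supp u ∩ supp v).card % 2 = 0)
    (h1 : (supp v₁).card % 8 = 4) (h2 : (supp v₂).card % 8 = 4)
    (h3 : (supp v₃).card % 8 = 4)
    (h12 : (supp v₁ ∩ supp v₂).card % 4 = 0)
    (h13 : (supp v₁ ∩ supp v₃).card % 4 = 0)
    (h23 : (supp v₂ ∩ supp v₃).card % 4 = 0)
    (h123 : Odd (supp v₁ ∩ supp v₂ ∩ supp v₃).card)
    (hcov : ∀ k : Fin m, ∃ v ∈ Submodule.span (ZMod 2)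
      ({v₁, v₂, v₃} : Set (Fin m → ZMod 2)), v k ≠ 0) :
    17 ≤ m ∧ (m = 17 → ∃ π : Equiv.Perm (Fin m),
      Submodule.map (permMap π)
          (Submodule.span (ZMod 2) ({v₁, v₂, v₃} : Set (Fin m → ZMod 2))) =
        Submodule.span (ZMod 2) ({indVec {1, 2, 3, 4, 5, 6, 7, 8, 9, 10, 11, 12}, indVec {1, 2, 3, 4, 5, 6, 7, 8, 13, 14, 15, 16},
          indVec {1, 2, 3, 4, 5, 9, 10, 11, 13, 14, 15, 17}} : Set (Fin m → ZMod 2))) :=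
  stmt16_general m v₁ v₂ v₃ h1 h2 h3 h12 h13 h23 h123 hcov
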